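/- Let S be the (d+2)×(d+2) block-diagonal matrix S = diag(I₂, ¼ I_d) and for each j ∈ {1,…,d} let A^j(U) be the matrix with entries A^j_{k,k}(U) = U_{j+2} for all k, A^j_{1,j+2}(U) = U₁/2, A^j_{2,j+2}(U) = U₂/2, A^j_{j+2,1}(U) = 2U₁, A^j_{j+2,2}(U) = 2U₂, and zero otherwise. Then S is symmetric positive definite and S A^j(U) is a symmetric matrix for every U ∈ ℝ^{d+2} and every j. -/

import Mathlib

/-!
`A^j(U)` is `U_{j+2} I` plus, for `i = 1, 2`, the mirrored pair of entries `U_i/2` at `(i, j+2)`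
and `2U_i` at `(j+2, i)`. Left multiplication by the diagonal `S` keeps the first term symmetric
and scales the pair to `1 · U_i/2` and `¼ · 2U_i`, which agree.
-/

/-- Index `j+2` in `Fin (d+2)`, for `j : Fin d`. -/
def jdx {d : ℕ} (j : Fin d) : Fin (d+2) := ⟨j.1 + 2, by omega⟩

/-- The symmetrizer `S = diag(I₂, ¼ I_d)`. -/
noncomputable def Smat (d : ℕ) : Matrix (Fin (d+2)) (Fin (d+2)) ℝ :=
  Matrix.diagonal fun k => if (k : ℕ) < 2 then 1 else 1/4

/-- The matrix `A^j(U)` of the symmetrized hyperbolic system. -/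
noncomputable def Amat {d : ℕ} (j : Fin d) (U : Fin (d+2) → ℝ) :
    Matrix (Fin (d+2)) (Fin (d+2)) ℝ :=
  Matrix.of fun k l =>
    (if k = l then U (jdx j) else 0)
    + (if k = 0 ∧ l = jdx j then U 0 / 2 else 0)
    + (if k = 1 ∧ l = jdx j then U 1 / 2 else 0)
    + (if k = jdx j ∧ l = 0 then 2 * U 0 else 0)
    + (if k = jdx j ∧ l = 1 then 2 * U 1 else 0)

namespace Matrix

variable {n α : Type*} [Fintype n] [DecidableEq n] [NonUnitalNonAssocSemiring α]

theorem diagonal_mul_single (d : n → α) (i j : n) (c : α) :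
    diagonal d * single i j c = single i j (d i * c) := by
  ext k l
  by_cases hk : i = k <;> simp [diagonal_mul, single_apply, hk]

theorem isSymm_diagonal_mul_single_add_single (d : n → α) {i j : n} {a b : α}
    (h : d i * a = d j * b) : (diagonal d * (single i j a + single j i b)).IsSymm := by
  rw [mul_add, diagonal_mul_single, diagonal_mul_single, h, IsSymm, transpose_add,
    transpose_single, transpose_single, add_comm]

end Matrix

open Matrix

theorem Amat_eq_smul_one_add_single {d : ℕ} (j : Fin d) (U : Fin (d+2) → ℝ) :
    Amat j U = U (jdx j) • 1
      + (single 0 (jdx j) (U 0 / 2) + single (jdx j) 0 (2 * U 0))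
      + (single 1 (jdx j) (U 1 / 2) + single (jdx j) 1 (2 * U 1)) := by
  ext k l
  simp only [Amat, of_apply, Matrix.add_apply, Matrix.smul_apply, one_apply, single_apply,
    smul_eq_mul, eq_comm]
  split_ifs <;> ring

theorem Smat_posDef (d : ℕ) : (Smat d).PosDef :=
  PosDef.diagonal fun k => by split_ifs <;> norm_num

theorem Smat_mul_Amat_isSymm {d : ℕ} (U : Fin (d+2) → ℝ) (j : Fin d) :
    (Smat d * Amat j U).IsSymm := by
  rw [Amat_eq_smul_one_add_single, mul_add, mul_add, Matrix.mul_smul, mul_one]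
  refine ((isSymm_diagonal _).smul _).add ?_ |>.add ?_ <;>
    exact isSymm_diagonal_mul_single_add_single _ (by simp [jdx]; ring)

/-- `S` is symmetric positive definite and `S A^j(U)` is symmetric
for every `U ∈ ℝ^{d+2}` and every `j`. -/
theorem stmt_3 (d : ℕ) :
    (Smat d).IsSymm ∧ (Smat d).PosDef ∧
    ∀ (U : Fin (d+2) → ℝ) (j : Fin d), (Smat d * Amat j U).IsSymm :=
  ⟨isSymm_diagonal _, Smat_posDef d, Smat_mul_Amat_isSymm⟩
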